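/- Let 6/5 < γ < 2, A > 0, R̄ > 0, κ > 0, and let ρ̄ ∈ C¹((0, R̄)) be positive. For a positive C¹ density ρ on an interval (0, L) with pressure P = Aρ^γ, define the linearized operator (ℒ_ρ y)(r) = -(1/(ρ(r) r⁴)) · d/dr( γ r⁴ P(r) y'(r) ) + ((4-3γ)/(ρ(r) r)) · P'(r) · y(r). Define the rescaled density ρ_κ(r) = κ^{2/(γ-2)} ρ̄(r/κ) on (0, κR̄). Then for every y ∈ C_c^∞((0, κR̄)), writing y_κ(s) := y(κs), the following two identities hold: ∫₀^{κR̄} (ℒ_{ρ_κ} y)(r) · y(r) · ρ_κ(r) r⁴ dr = κ^{(5γ-6)/(γ-2)} ∫₀^{R̄} (ℒ_{ρ̄} y_κ)(s) · y_κ(s) · ρ̄(s) s⁴ ds, and ∫₀^{κR̄} y(r)² ρ_κ(r) r⁴ dr = κ^{(5γ-8)/(γ-2)} ∫₀^{R̄} y_κ(s)² ρ̄(s) s⁴ ds. Consequently the Rayleigh quotient of ℒ_{ρ_κ} at y equals κ^{2/(γ-2)} times the Rayleigh quotient of ℒ_{ρ̄} at y_κ. -/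

import Mathlib

open Real MeasureTheory Set Filter Topology

/-- The linearized oscillation operator `ℒ_ρ` associated with a density `ρ` and
pressure `P = Aρ^γ`:
`(ℒ_ρ y)(r) = -(1/(ρ r⁴)) (γ r⁴ P y')' + ((4-3γ)/(ρ r)) P' y`. -/
noncomputable def Lop (A γ : ℝ) (ρ : ℝ → ℝ) (y : ℝ → ℝ) : ℝ → ℝ := fun r =>
  -(1 / (ρ r * r^4)) * deriv (fun s => γ * s^4 * (A * ρ s ^ γ) * deriv y s) r
  + ((4 - 3*γ) / (ρ r * r)) * deriv (fun s => A * ρ s ^ γ) r * y r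

/-!
Write `c = κ^{2/(γ-2)}`, so that `ρ_κ(κs) = c ρ̄(s)`. Under `r = κs` the pressure of `ρ_κ` is
`c^γ` times that of `ρ̄` and every `d/dr` becomes `κ⁻¹ d/ds`, so pointwise
`(ℒ_{ρ_κ} y)(κs) = c^{γ-1} κ⁻² (ℒ_{ρ̄} y_κ)(s)`, while the weight `ρ r⁴ dr` picks up `c κ⁵`.
The quadratic form therefore scales by `c^γ κ³ = κ^{(5γ-6)/(γ-2)}` and the squared norm by
`c κ⁵ = κ^{(5γ-8)/(γ-2)}`; their ratio is `κ^{2/(γ-2)}`.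
-/

lemma deriv_comp_div_const (f : ℝ → ℝ) (κ x : ℝ) :
    deriv (fun u => f (u / κ)) x = κ⁻¹ * deriv f (x / κ) := by
  simpa only [div_eq_inv_mul, smul_eq_mul] using deriv_comp_mul_left κ⁻¹ f x

lemma deriv_eq_of_eventuallyEq_comp_div {f g : ℝ → ℝ} {a κ s : ℝ} (hκ : κ ≠ 0)
    (h : f =ᶠ[𝓝 (κ * s)] fun u => a * g (u / κ)) :
    deriv f (κ * s) = a / κ * deriv g s := by
  rw [h.deriv_eq, deriv_const_mul_field, deriv_comp_div_const, mul_div_cancel_left₀ _ hκ]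
  ring

lemma eventually_nhds_comp_div {p : ℝ → Prop} {κ s : ℝ} (hκ : κ ≠ 0)
    (h : ∀ᶠ t in 𝓝 s, p t) : ∀ᶠ u in 𝓝 (κ * s), p (u / κ) := by
  have hcont : Tendsto (fun u => u / κ) (𝓝 (κ * s)) (𝓝 s) := by
    simpa only [id, mul_div_cancel_left₀ _ hκ] using (continuous_id.div_const κ).tendsto (κ * s)
  exact hcont.eventually h

section Rescale

variable {A γ c κ s : ℝ} {ρ : ℝ → ℝ}

lemma deriv_pressure_rescale (hc : 0 < c) (hκ : κ ≠ 0) (hρ : ∀ᶠ t in 𝓝 s, 0 < ρ t) :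
    deriv (fun u => A * (c * ρ (u / κ)) ^ γ) (κ * s)
      = c ^ γ / κ * deriv (fun t => A * ρ t ^ γ) s := by
  refine deriv_eq_of_eventuallyEq_comp_div hκ ?_
  filter_upwards [eventually_nhds_comp_div hκ hρ] with u hu
  rw [mul_rpow hc.le hu.le]
  ring

lemma deriv_flux_rescale (hc : 0 < c) (hκ : κ ≠ 0) (hρ : ∀ᶠ t in 𝓝 s, 0 < ρ t) (y : ℝ → ℝ) :
    deriv (fun u => γ * u ^ 4 * (A * (c * ρ (u / κ)) ^ γ) * deriv y u) (κ * s)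
      = c ^ γ * κ ^ 2 *
        deriv (fun t => γ * t ^ 4 * (A * ρ t ^ γ) * deriv (fun v => y (κ * v)) t) s := by
  rw [deriv_eq_of_eventuallyEq_comp_div (a := c ^ γ * κ ^ 3) hκ]
  · field_simp
  filter_upwards [eventually_nhds_comp_div hκ hρ] with u hu
  have hyκ : deriv (fun v => y (κ * v)) (u / κ) = κ * deriv y u := by
    rw [deriv_comp_mul_left, smul_eq_mul, mul_div_cancel₀ _ hκ]
  rw [hyκ, mul_rpow hc.le hu.le]
  field_simp

lemma Lop_rescale (hc : 0 < c) (hκ : κ ≠ 0) (hρ : ∀ᶠ t in 𝓝 s, 0 < ρ t)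
    (y : ℝ → ℝ) :
    Lop A γ (fun u => c * ρ (u / κ)) y (κ * s)
      = c ^ (γ - 1) / κ ^ 2 * Lop A γ ρ (fun u => y (κ * u)) s := by
  simp only [Lop, deriv_flux_rescale hc hκ hρ, deriv_pressure_rescale hc hκ hρ,
    mul_div_cancel_left₀ _ hκ, rpow_sub_one hc.ne']
  -- opaque derivatives, so that `field_simp` does not rewrite under their binders
  generalize deriv (fun t => γ * t ^ 4 * (A * ρ t ^ γ) * deriv (fun v => y (κ * v)) t) s = F
  generalize deriv (fun t => A * ρ t ^ γ) s = P'
  field_simp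

end Rescale

lemma integral_mul_density_rescale (f ρ : ℝ → ℝ) {c κ : ℝ} (hκ : κ ≠ 0) (R : ℝ) :
    ∫ r in (0:ℝ)..(κ * R), f r * (c * ρ (r / κ) * r ^ 4)
      = c * κ ^ 5 * ∫ s in (0:ℝ)..R, f (κ * s) * (ρ s * s ^ 4) := by
  have hsubst := intervalIntegral.smul_integral_comp_mul_left (a := 0) (b := R)
    (fun r => f r * (c * ρ (r / κ) * r ^ 4)) κ
  rw [mul_zero] at hsubst
  rw [← hsubst, smul_eq_mul, ← intervalIntegral.integral_const_mul,
    ← intervalIntegral.integral_const_mul]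
  congr 1
  funext s
  rw [mul_div_cancel_left₀ _ hκ]
  ring

lemma integral_Lop_rescale (A γ : ℝ) {ρ : ℝ → ℝ} {c κ R : ℝ} (hc : 0 < c) (hκ : κ ≠ 0)
    (hR : 0 ≤ R) (hρ : ∀ r ∈ Ioo 0 R, 0 < ρ r) (y : ℝ → ℝ) :
    ∫ r in (0:ℝ)..(κ * R),
        Lop A γ (fun u => c * ρ (u / κ)) y r * y r * (c * ρ (r / κ) * r ^ 4)
      = c ^ γ * κ ^ 3 *
        ∫ s in (0:ℝ)..R, Lop A γ ρ (fun u => y (κ * u)) s * y (κ * s) * (ρ s * s ^ 4) := by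
  rw [integral_mul_density_rescale _ ρ hκ, ← intervalIntegral.integral_const_mul,
    ← intervalIntegral.integral_const_mul]
  refine intervalIntegral.integral_congr_Ioo_of_le hR fun s hs => ?_
  have hρs : ∀ᶠ t in 𝓝 s, 0 < ρ t := eventually_of_mem (isOpen_Ioo.mem_nhds hs) hρ
  rw [Lop_rescale hc hκ hρs, rpow_sub_one hc.ne']
  field_simp

theorem rayleigh_scaling (γ A Rb κ : ℝ) (ρb : ℝ → ℝ)
    (hγ2 : γ < 2) (hR : 0 < Rb) (hκ : 0 < κ)
    (hρpos : ∀ r ∈ Ioo 0 Rb, 0 < ρb r)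
    (y : ℝ → ℝ) :
    (∫ r in (0:ℝ)..(κ*Rb),
        Lop A γ (fun u => κ ^ ((2:ℝ)/(γ-2)) * ρb (u / κ)) y r * y r *
          ((κ ^ ((2:ℝ)/(γ-2)) * ρb (r / κ)) * r^4))
      = κ ^ ((5*γ-6)/(γ-2)) *
        ∫ s in (0:ℝ)..Rb, Lop A γ ρb (fun u => y (κ*u)) s * y (κ*s) * (ρb s * s^4)
    ∧ (∫ r in (0:ℝ)..(κ*Rb), (y r)^2 * ((κ ^ ((2:ℝ)/(γ-2)) * ρb (r / κ)) * r^4))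
      = κ ^ ((5*γ-8)/(γ-2)) * ∫ s in (0:ℝ)..Rb, (y (κ*s))^2 * (ρb s * s^4)
    ∧ (∫ r in (0:ℝ)..(κ*Rb),
        Lop A γ (fun u => κ ^ ((2:ℝ)/(γ-2)) * ρb (u / κ)) y r * y r *
          ((κ ^ ((2:ℝ)/(γ-2)) * ρb (r / κ)) * r^4)) /
       (∫ r in (0:ℝ)..(κ*Rb), (y r)^2 * ((κ ^ ((2:ℝ)/(γ-2)) * ρb (r / κ)) * r^4))
      = κ ^ ((2:ℝ)/(γ-2)) *
        ((∫ s in (0:ℝ)..Rb, Lop A γ ρb (fun u => y (κ*u)) s * y (κ*s) * (ρb s * s^4)) /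
         (∫ s in (0:ℝ)..Rb, (y (κ*s))^2 * (ρb s * s^4))) := by
  have hγ : γ - 2 ≠ 0 := sub_ne_zero.mpr hγ2.ne
  have hc : 0 < κ ^ ((2:ℝ)/(γ-2)) := rpow_pos_of_pos hκ _
  have hform : (κ ^ ((2:ℝ)/(γ-2))) ^ γ * κ ^ 3 = κ ^ ((5*γ-6)/(γ-2)) := by
    rw [← rpow_mul hκ.le, ← rpow_natCast, ← rpow_add hκ]
    congr 1
    field_simp
    ring
  have hnorm : κ ^ ((2:ℝ)/(γ-2)) * κ ^ 5 = κ ^ ((5*γ-8)/(γ-2)) := by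
    rw [← rpow_natCast, ← rpow_add hκ]
    congr 1
    field_simp
    ring
  have hquot : κ ^ ((5*γ-6)/(γ-2)) / κ ^ ((5*γ-8)/(γ-2)) = κ ^ ((2:ℝ)/(γ-2)) := by
    rw [← rpow_sub hκ]
    congr 1
    field_simp
    ring
  have I1 := integral_Lop_rescale A γ hc hκ.ne' hR.le hρpos y
  have I2 := integral_mul_density_rescale (fun r => y r ^ 2) ρb
    (c := κ ^ ((2:ℝ)/(γ-2))) hκ.ne' Rb
  rw [hform] at I1
  rw [hnorm] at I2
  refine ⟨I1, I2, ?_⟩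
  rw [I1, I2, mul_div_mul_comm, hquot]
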